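/- arXiv:2311.09045 — 2 statements merged into one kernel-verified Lean document; each statement's English description precedes it below -/
import Mathlib

section
/- With F_{i,m,u} = binom(m,u)·(-1)^u·m!/((m+i+u+1/2)_{m+1}) · (x+m+i+u)_{2m+2i+2u+1}·(y+m+i)_{m-u}·(y-i-u-1)_{m-u} and partial sums S_{i,m,l} = ∑_{u=l}^{m} F_{i,m,u}, the quantity M_{i,m,l} = −2S_{i+1,m,l} + (x²+y²−(i+m+1)²−i²)·S_{i,m,l} − ((2i−1)/(2m+2))·S_{i−1,m+1,l+1} equals binom(m,l)·(-1)^l·m!/((m+i+l+1/2)_{m+1}) · (y² + l(2m+2i+l+2) − i²) · (x+m+i+l)_{2m+2i+2l+1} · (y+m+i)_{m−l} · (y−i−l−1)_{m−l}, for all integers i ≥ 1, m ≥ 0, 0 ≤ l ≤ m+1. -/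
/-- Falling factorial `(a)_k = a(a-1)⋯(a-k+1)`. -/
noncomputable def ff {R : Type*} [CommRing R] (a : R) (k : ℕ) : R :=
  ∏ j ∈ Finset.range k, (a - (j : R))

/-- Falling factorial with integer index, `(a)_{-k}` interpreted as `1/((a+1)⋯(a+k))`. -/
noncomputable def ffz (a : ℚ) (n : ℤ) : ℚ :=
  if 0 ≤ n then ∏ j ∈ Finset.range n.toNat, (a - (j : ℚ))
  else (∏ j ∈ Finset.range (-n).toNat, (a + (j : ℚ) + 1))⁻¹

/-- The summand `F_{i,m,u}` (evaluated at `(x,y)`). -/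
noncomputable def Fterm (i m u : ℕ) (x y : ℚ) : ℚ :=
  (m.choose u : ℚ) * (-1)^u * (m.factorial : ℚ) / ff ((m:ℚ) + i + u + 1/2) (m+1)
    * ff (x + m + i + u) (2*m+2*i+2*u+1) * ff (y + m + i) (m-u) * ff (y - i - u - 1) (m-u)

/-- The partial sum `S_{i,m,l} = ∑_{u=l}^{m} F_{i,m,u}`. -/
noncomputable def S (i m l : ℕ) (x y : ℚ) : ℚ := ∑ u ∈ Finset.Icc l m, Fterm i m u x y

/-! For `l ≤ m` the `l`-th summand of `M_{i,m,l}`,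
`-2 F_{i+1,m,l} + (x² + y² - (i+m+1)² - i²) F_{i,m,l} - (2i-1)/(2m+2) F_{i-1,m+1,l+1}`,
telescopes: it equals `Q_l F_{i,m,l} - Q_{l+1} F_{i,m,l+1}` with `Q_l = y² + l(2m+2i+l+2) - i²`.
The falling factorials in `F_{j,m,u}` depend only on `m+j+u`, `m+j`, `j+u+1` and `m-u`, so each of
these five terms is a polynomial multiple of the falling factorials of `F_{i,m,l}` (of `F_{i,m,l+1}`
when `l < m`), divided by nonzero half-integers, and the identity reduces to one between rational
functions. Descending induction on `l`, starting from `F_{i,m,m+1} = 0`, gives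
`M_{i,m,l} = Q_l F_{i,m,l}`. -/

section FallingFactorial

variable {R : Type*} [CommRing R]

@[simp] theorem ff_zero (a : R) : ff a 0 = 1 := by simp [ff]

theorem ff_succ (a : R) (k : ℕ) : ff a (k + 1) = ff a k * (a - k) := by
  simp [ff, Finset.prod_range_succ]

theorem ff_add_one_succ (a : R) (k : ℕ) : ff (a + 1) (k + 1) = (a + 1) * ff a k := by
  rw [ff, ff, Finset.prod_range_succ']
  simp [mul_comm, add_sub_add_right_eq_sub]

theorem ff_add_natCast_succ (a : R) (n k : ℕ) :
    ff (a + (n + 1 : ℕ)) (k + 1) = (a + (n + 1 : ℕ)) * ff (a + n) k := by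
  rw [Nat.cast_succ, ← add_assoc, ff_add_one_succ]

theorem ff_sub_natCast (a : R) (n k : ℕ) :
    ff (a - n) (k + 1) = (a - n) * ff (a - (n + 1 : ℕ)) k := by
  rw [show a - n = a - (n + 1 : ℕ) + 1 by push_cast; ring, ff_add_one_succ]

end FallingFactorial

theorem ff_half_add_natCast_ne_zero {K : Type*} [Field K] [CharZero K] (n k : ℕ) :
    ff (1 / 2 + (n : K)) k ≠ 0 := by
  refine Finset.prod_ne_zero_iff.mpr fun j _ h => ?_
  have h' : ((2 * ((n : ℤ) - j) + 1 : ℤ) : K) = 0 := by push_cast; linear_combination 2 * h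
  have : 2 * ((n : ℤ) - j) + 1 = 0 := by exact_mod_cast h'
  omega

theorem ffz_natCast_sub (a : ℚ) {m l : ℕ} (h : l ≤ m) : ffz a ((m : ℤ) - l) = ff a (m - l) := by
  rw [ffz, if_pos (by omega), show ((m : ℤ) - l).toNat = m - l by omega, ff]

section Choose

variable {K : Type*} [Field K] [CharZero K]

theorem cast_succ_choose_succ (n k : ℕ) :
    ((n + 1).choose (k + 1) : K) = n.choose k * (n + 1) / (k + 1) := by
  rw [eq_div_iff (Nat.cast_add_one_ne_zero k)]
  exact_mod_cast (Nat.add_one_mul_choose_eq n k).symm.trans (mul_comm _ _)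

theorem cast_choose_succ_right {n k : ℕ} (h : k ≤ n) :
    (n.choose (k + 1) : K) = n.choose k * (n - k) / (k + 1) := by
  rw [eq_div_iff (Nat.cast_add_one_ne_zero k), ← Nat.cast_sub h]
  exact_mod_cast Nat.choose_succ_right_eq n k

end Choose

-- `1 / 2` comes first so that `ff_add_natCast_succ` applies to every shifted argument.
theorem Fterm_eq_natCast_sums (j m u : ℕ) (x y : ℚ) :
    Fterm j m u x y = (m.choose u : ℚ) * (-1) ^ u * m.factorial
        / ff (1 / 2 + ((m + j + u : ℕ) : ℚ)) (m + 1) * ff (x + (m + j + u : ℕ)) (2 * (m + j + u) + 1)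
        * ff (y + (m + j : ℕ)) (m - u) * ff (y - (j + u + 1 : ℕ)) (m - u) := by
  unfold Fterm
  push_cast
  ring_nf

theorem Fterm_eq_zero_of_lt {j m u : ℕ} (h : m < u) (x y : ℚ) : Fterm j m u x y = 0 := by
  simp [Fterm, Nat.choose_eq_zero_of_lt h]

theorem S_eq_Fterm_add {j m l : ℕ} (h : l ≤ m) (x y : ℚ) :
    S j m l x y = Fterm j m l x y + S j m (l + 1) x y := by
  rw [S, S, ← Finset.add_sum_Ioc_eq_sum_Icc h, Finset.Icc_add_one_left_eq_Ioc]

def Qfactor (i m l : ℕ) (y : ℚ) : ℚ := y ^ 2 + (l : ℚ) * (2 * (m : ℚ) + 2 * i + l + 2) - (i : ℚ) ^ 2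

theorem Fterm_telescoping (i m l : ℕ) (hi : 1 ≤ i) (hl : l ≤ m) (x y : ℚ) :
    -2 * Fterm (i + 1) m l x y + (x ^ 2 + y ^ 2 - ((i : ℚ) + m + 1) ^ 2 - (i : ℚ) ^ 2) * Fterm i m l x y
      - (2 * (i : ℚ) - 1) / (2 * (m : ℚ) + 2) * Fterm (i - 1) (m + 1) (l + 1) x y
    = Qfactor i m l y * Fterm i m l x y - Qfactor i m (l + 1) y * Fterm i m (l + 1) x y := by
  simp only [Fterm_eq_natCast_sums]
  rw [show m + (i + 1) + l = (m + i + l) + 1 by omega,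
    show m + 1 + (i - 1) + (l + 1) = (m + i + l) + 1 by omega,
    show m + i + (l + 1) = (m + i + l) + 1 by omega,
    show m + (i + 1) = (m + i) + 1 by omega,
    show m + 1 + (i - 1) = m + i by omega,
    show i + 1 + l + 1 = (i + l + 1) + 1 by omega,
    show i - 1 + (l + 1) + 1 = i + l + 1 by omega,
    show i + (l + 1) + 1 = (i + l + 1) + 1 by omega,
    show m + 1 - (l + 1) = m - l by omega,
    show 2 * (m + i + l + 1) + 1 = 2 * (m + i + l) + 1 + 1 + 1 by ring]
  rw [ff_add_natCast_succ (1 / 2 : ℚ) _ (m + 1), ff_add_natCast_succ (1 / 2 : ℚ),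
    ff_succ (1 / 2 + _ : ℚ) m, ff_add_natCast_succ x, ff_succ (x + _) (2 * _ + 1),
    cast_succ_choose_succ, cast_choose_succ_right hl, Nat.factorial_succ]
  have hE : ff (1 / 2 + ((m + i + l : ℕ) : ℚ)) m ≠ 0 := ff_half_add_natCast_ne_zero _ _
  have hA : (1 / 2 + ((m + i + l + 1 : ℕ) : ℚ)) ≠ 0 := by positivity
  have hB : (1 / 2 + ((m + i + l : ℕ) : ℚ) - (m : ℚ)) ≠ 0 := by
    push_cast; ring_nf; positivity
  generalize ff (1 / 2 + ((m + i + l : ℕ) : ℚ)) m = E at hE ⊢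
  generalize ff (x + ((m + i + l : ℕ) : ℚ)) _ = X
  -- as atoms, `field_simp` can clear the half-integer denominators
  generalize hA' : (1 / 2 + ((m + i + l + 1 : ℕ) : ℚ)) = A at hA ⊢
  generalize hB' : (1 / 2 + ((m + i + l : ℕ) : ℚ) - (m : ℚ)) = B at hB ⊢
  unfold Qfactor
  rcases hl.lt_or_eq with hlt | rfl
  · obtain ⟨k, rfl⟩ := Nat.exists_eq_add_of_lt hlt
    rw [show l + k + 1 - l = k + 1 by omega, show l + k + 1 - (l + 1) = k by omega,
      ff_add_natCast_succ y, ff_succ (y - _), ff_succ (y + _), ff_sub_natCast]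
    field_simp
    subst hA' hB'
    push_cast
    ring
  · simp only [Nat.sub_self, ff_zero, Nat.choose_self]
    field_simp
    subst hA' hB'
    push_cast
    ring

noncomputable def M (i m l : ℕ) (x y : ℚ) : ℚ :=
  -2 * S (i + 1) m l x y + (x ^ 2 + y ^ 2 - ((i : ℚ) + m + 1) ^ 2 - (i : ℚ) ^ 2) * S i m l x y
    - (2 * (i : ℚ) - 1) / (2 * (m : ℚ) + 2) * S (i - 1) (m + 1) (l + 1) x y

theorem M_eq_Qfactor_mul_Fterm {i m l : ℕ} (hi : 1 ≤ i) (hl : l ≤ m + 1) (x y : ℚ) :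
    M i m l x y = Qfactor i m l y * Fterm i m l x y := by
  induction hl using Nat.decreasingInduction with
  | self => simp [M, S, Fterm_eq_zero_of_lt]
  | of_succ l hl ih =>
    have hl : l ≤ m := Nat.le_of_lt_succ hl
    rw [M] at ih ⊢
    rw [S_eq_Fterm_add hl, S_eq_Fterm_add hl, S_eq_Fterm_add (Nat.succ_le_succ hl)]
    linear_combination ih + Fterm_telescoping i m l hi hl x y

theorem stmt4 (i m l : ℕ) (hi : 1 ≤ i) (hl : l ≤ m + 1) (x y : ℚ) :
    -2 * S (i+1) m l x y + (x^2 + y^2 - ((i:ℚ) + m + 1)^2 - (i:ℚ)^2) * S i m l x y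
        - (2*(i:ℚ) - 1) / (2*(m:ℚ) + 2) * S (i-1) (m+1) (l+1) x y =
      (m.choose l : ℚ) * (-1)^l * (m.factorial : ℚ) / ff ((m:ℚ) + i + l + 1/2) (m+1)
        * (y^2 + (l:ℚ) * (2*(m:ℚ) + 2*i + l + 2) - (i:ℚ)^2)
        * ff (x + m + i + l) (2*m+2*i+2*l+1)
        * ffz (y + m + i) ((m:ℤ) - l) * ffz (y - i - l - 1) ((m:ℤ) - l) := by
  rw [← M, M_eq_Qfactor_mul_Fterm hi hl]
  rcases hl.lt_or_eq with hlt | rfl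
  · rw [ffz_natCast_sub _ (Nat.le_of_lt_succ hlt), ffz_natCast_sub _ (Nat.le_of_lt_succ hlt),
      Qfactor, Fterm]
    ring
  · simp [Fterm_eq_zero_of_lt]
end

section
/- For each pair of nonnegative integers i, m there exists a constant B_{i,m} such that 2F~_i^m(x,y) ≡ B_{i,m}·(x+m+i)_{3m+2i+1}·(x−1/2)_m ≡ −B_{i,m}·(y+m+i)_{3m+2i+1}·(y−1/2)_m modulo the ideal generated by (x+y−m) in ℚ[x,y]. -/
open MvPolynomial

/-- `F2 i m = 2·F̃ᵢᵐ(x,y)` as a polynomial in `ℚ[x,y]`, with `x = X 0`, `y = X 1`. -/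
noncomputable def F2 (i m : ℕ) : MvPolynomial (Fin 2) ℚ :=
  ∑ u ∈ Finset.range (m+1),
    C ((m.choose u : ℚ) * (-1)^u * (m.factorial : ℚ) / ff ((m:ℚ) + i + u + 1/2) (m+1))
      * ff (X 0 + C ((m:ℚ) + i + u)) (2*m+2*i+2*u+1)
      * ff (X 1 + C ((m:ℚ) + i)) (m-u)
      * ff (X 1 - C ((i:ℚ) + u + 1)) (m-u)

/-!
On the line `y = m - x` (the substitution `restrictLine`) both memberships become identities in
`ℚ[x]`. There the `u`-th summand of `2F̃` is `(x+m+i)_{3m+2i+1}` times `(x+m+i+u)_u (x+i)_{m-u}`,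
once the two `y`-factors are reflected by `(n-1-a)_n = (-1)^n (a)_n`. The cofactor
`G = lineCofactor i m` has degree at most `m` and vanishes at `x = k + 1/2` for `k < m`: multiplied
by the nonzero constant `(k+1/2+m+i)_m`, its `u`-th summand becomes `(-1)^u C(m,u) m! P(u)` for a
polynomial `P` of degree `m - 1`, so `G(k+1/2)` is a multiple of the `m`-th finite difference of
`P`. Hence `G = B (x-1/2)_m`, and the same reflection turns `(y+m+i)_{3m+2i+1} (y-1/2)_m` into
minus the corresponding product in `x`.
-/

section FallingFactorial

variable {R : Type*} [CommRing R]

theorem ff_eq_eval_descPochhammer (a : R) (n : ℕ) : ff a n = (descPochhammer R n).eval a :=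
  (descPochhammer_eval_eq_prod_range n a).symm

theorem ff_add (a : R) (p q : ℕ) : ff a (p + q) = ff a p * ff (a - p) q := by
  simp only [ff, Finset.prod_range_add, Nat.cast_add, sub_sub]

theorem ff_add_add (a : R) (p q r : ℕ) :
    ff a (p + q + r) = ff a p * ff (a - p) q * ff (a - p - q) r := by
  rw [ff_add, ff_add, Nat.cast_add, sub_sub]

theorem ff_reflect (a : R) (n : ℕ) : ff ((n : R) - 1 - a) n = (-1) ^ n * ff a n := by
  rw [ff_eq_eval_descPochhammer, ff_eq_eval_descPochhammer, descPochhammer_eval_eq_ascPochhammer,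
    show (n : R) - 1 - a - n + 1 = -a by ring, ascPochhammer_eval_neg_eq_descPochhammer]

theorem map_ff {S F : Type*} [CommRing S] [FunLike F R S] [RingHomClass F R S] (f : F) (a : R)
    (n : ℕ) : f (ff a n) = ff (f a) n := by
  simp [ff, map_prod]

theorem ff_pos {S : Type*} [CommRing S] [PartialOrder S] [IsStrictOrderedRing S] {s : S} {n : ℕ}
    (h : (n : S) - 1 < s) : 0 < ff s n := by
  rw [ff_eq_eval_descPochhammer]
  exact descPochhammer_pos h

theorem natDegree_ff_X_add_C_le (c : R) (n : ℕ) :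
    (ff (Polynomial.X + Polynomial.C c) n).natDegree ≤ n := by
  refine (Polynomial.natDegree_prod_le _ _).trans ?_
  calc _ ≤ ∑ _j ∈ Finset.range n, 1 := Finset.sum_le_sum fun j _ => by
          rw [← map_natCast Polynomial.C, add_sub_assoc, ← map_sub]
          exact Polynomial.natDegree_add_C.trans_le Polynomial.natDegree_X_le
    _ = n := by simp

theorem eval_ff_X_add_C (x c : R) (n : ℕ) :
    (ff (Polynomial.X + Polynomial.C c) n).eval x = ff (x + c) n := by
  rw [← Polynomial.coe_evalRingHom, map_ff]
  simp

theorem ff_summand_on_line (x : R) {i m u : ℕ} (hu : u ≤ m) :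
    ff (x + (m + i + u)) (2 * m + 2 * i + 2 * u + 1) * ff (m - x + (m + i)) (m - u)
        * ff (m - x - (i + u + 1)) (m - u)
      = ff (x + (m + i)) (3 * m + 2 * i + 1) * (ff (x + (m + i + u)) u * ff (x + i) (m - u)) := by
  obtain ⟨v, rfl⟩ := Nat.exists_eq_add_of_le hu
  rw [Nat.add_sub_cancel_left]
  set L := 3 * u + 2 * v + 2 * i + 1
  have hfirst : ff (x + (↑(u + v) + i + u)) (2 * (u + v) + 2 * i + 2 * u + 1)
      = ff (x + (↑(u + v) + i + u)) u * ff (x + (↑(u + v) + i)) L := by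
    rw [show 2 * (u + v) + 2 * i + 2 * u + 1 = u + L by ring, ff_add, add_sub_assoc,
      show (↑(u + v) + i + u - u : R) = ↑(u + v) + i by ring]
  have hcommon : ff (x + (↑(u + v) + i)) (3 * (u + v) + 2 * i + 1)
      = ff (x + (↑(u + v) + i)) L * ff (x - (2 * u + v + i + 1)) v := by
    rw [show 3 * (u + v) + 2 * i + 1 = L + v by ring, ff_add,
      show (x + (↑(u + v) + i) - L : R) = x - (2 * u + v + i + 1) by
        simp only [L]; push_cast; ring]
  have hsecond : ff (↑(u + v) - x + (↑(u + v) + i)) v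
      = (-1) ^ v * ff (x - (2 * u + v + i + 1)) v := by
    rw [← ff_reflect]
    congr 1
    push_cast
    ring
  have hthird : ff (↑(u + v) - x - (i + u + 1)) v = (-1) ^ v * ff (x + i) v := by
    rw [← ff_reflect]
    congr 1
    push_cast
    ring
  have hsq : ((-1 : R) ^ v) * (-1) ^ v = 1 := by rw [← mul_pow]; simp
  rw [hfirst, hcommon, hsecond, hthird]
  linear_combination (ff (x + (↑(u + v) + i + u)) u * ff (x + (↑(u + v) + i)) L
    * ff (x - (2 * u + v + i + 1)) v * ff (x + i) v) * hsq

end FallingFactorial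

theorem Polynomial.sum_range_neg_one_pow_mul_choose_mul_eval_eq_zero {R : Type*} [CommRing R]
    {P : Polynomial R} {n : ℕ} (hP : P.natDegree < n) :
    ∑ k ∈ Finset.range (n + 1), (-1) ^ k * (n.choose k : R) * P.eval (k : R) = 0 := by
  have h := congr_fun (Polynomial.fwdDiff_iter_eq_zero_of_degree_lt hP) 0
  rw [fwdDiff_iter_eq_sum_shift] at h
  simp only [zsmul_eq_mul, zero_add, nsmul_eq_mul, mul_one] at h
  push_cast at h
  have hsign : ∀ k ∈ Finset.range (n + 1), (-1) ^ k * (n.choose k : R) * P.eval (k : R)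
      = (-1) ^ n * ((-1) ^ (n - k) * (n.choose k : R) * P.eval (k : R)) := by
    intro k hk
    rw [← mul_assoc, ← mul_assoc, ← pow_add,
      show n + (n - k) = k + 2 * (n - k) by grind, pow_add, pow_mul]
    simp
  rw [Finset.sum_congr rfl hsign, ← Finset.mul_sum, h, Pi.zero_apply, mul_zero]

theorem Polynomial.eq_C_coeff_mul_prod_X_sub_C {K : Type*} [CommRing K] [IsDomain K]
    {p : Polynomial K} {s : Finset K} (hp : p.natDegree ≤ s.card)
    (h : ∀ a ∈ s, p.eval a = 0) :
    p = Polynomial.C (p.coeff s.card) * ∏ a ∈ s, (Polynomial.X - Polynomial.C a) := by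
  open Polynomial in
  have hmonic : (∏ a ∈ s, (X - C a)).Monic := monic_prod_of_monic _ _ fun a _ => monic_X_sub_C a
  have hdeg : (∏ a ∈ s, (X - C a)).natDegree = s.card := by
    rw [natDegree_prod_of_monic _ _ fun a _ => monic_X_sub_C a]
    simp
  refine eq_of_degree_sub_lt_of_eval_finset_eq s ?_ fun a ha => ?_
  · rw [degree_lt_iff_coeff_zero]
    intro j hj
    rcases hj.lt_or_eq with hj | rfl
    · rw [coeff_sub, coeff_eq_zero_of_natDegree_lt (hp.trans_lt hj),
        coeff_eq_zero_of_natDegree_lt ((natDegree_C_mul_le _ _).trans_lt (hdeg ▸ hj)), sub_zero]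
    · rw [coeff_sub, coeff_C_mul, ← hdeg, hmonic.coeff_natDegree, hdeg, mul_one, sub_self]
  · rw [h a ha, eval_mul, eval_prod, Finset.prod_eq_zero ha (by simp), mul_zero]

noncomputable def restrictLine {R : Type*} [CommRing R] (c : R) :
    MvPolynomial (Fin 2) R →ₐ[R] Polynomial R :=
  aeval ![Polynomial.X, Polynomial.C c - Polynomial.X]

section RestrictLine

variable {R : Type*} [CommRing R] (c : R)

@[simp] theorem restrictLine_X_zero : restrictLine c (X 0) = Polynomial.X := by
  simp [restrictLine]

@[simp] theorem restrictLine_X_one : restrictLine c (X 1) = Polynomial.C c - Polynomial.X := by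
  simp [restrictLine]

@[simp] theorem restrictLine_C (a : R) : restrictLine c (C a) = Polynomial.C a := by
  simp [restrictLine, Polynomial.algebraMap_eq]

variable {c} in
theorem mem_span_of_restrictLine_eq_zero {p : MvPolynomial (Fin 2) R}
    (hp : restrictLine c p = 0) : p ∈ Ideal.span {X 0 + X 1 - C c} := by
  set I : Ideal (MvPolynomial (Fin 2) R) := Ideal.span {X 0 + X 1 - C c}
  -- modulo `I`, substituting `X 0` back into the restriction changes nothing: `X 1 ≡ C c - X 0`
  have hlift : ((Ideal.Quotient.mkₐ R I).comp (Polynomial.aeval (X 0))).comp (restrictLine c)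
      = Ideal.Quotient.mkₐ R I := by
    refine MvPolynomial.algHom_ext (Fin.forall_fin_two.2 ⟨by simp, ?_⟩)
    simp only [AlgHom.comp_apply, restrictLine_X_one, map_sub, Polynomial.aeval_C,
      Polynomial.aeval_X, algebraMap_eq, Ideal.Quotient.mkₐ_eq_mk]
    rw [← map_sub, eq_comm, Ideal.Quotient.eq,
      show (X 1 - (C c - X 0) : MvPolynomial (Fin 2) R) = X 0 + X 1 - C c by ring]
    exact Ideal.mem_span_singleton_self _
  rw [← Ideal.Quotient.eq_zero_iff_mem, ← Ideal.Quotient.mkₐ_eq_mk R, ← hlift]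
  simp [hp]

end RestrictLine

noncomputable def F2Coeff (i m u : ℕ) : ℚ :=
  (m.choose u : ℚ) * (-1) ^ u * (m.factorial : ℚ) / ff ((m : ℚ) + i + u + 1 / 2) (m + 1)

noncomputable def lineCofactor (i m : ℕ) : Polynomial ℚ :=
  ∑ u ∈ Finset.range (m + 1), Polynomial.C (F2Coeff i m u) *
    (ff (Polynomial.X + Polynomial.C ((m : ℚ) + i + u)) u
      * ff (Polynomial.X + Polynomial.C (i : ℚ)) (m - u))

theorem restrictLine_F2 (i m : ℕ) :
    restrictLine (m : ℚ) (F2 i m)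
      = ff (Polynomial.X + Polynomial.C ((m : ℚ) + i)) (3 * m + 2 * i + 1)
        * lineCofactor i m := by
  rw [F2, lineCofactor, map_sum, Finset.mul_sum]
  refine Finset.sum_congr rfl fun u hu => ?_
  have hline := ff_summand_on_line (Polynomial.X : Polynomial ℚ) (i := i)
    (Nat.lt_succ_iff.1 (Finset.mem_range.1 hu))
  simp only [map_mul, map_ff, map_add, map_sub, restrictLine_X_zero, restrictLine_X_one,
    restrictLine_C, map_natCast, map_one]
  rw [← F2Coeff]
  linear_combination Polynomial.C (F2Coeff i m u) * hline

theorem natDegree_lineCofactor_le (i m : ℕ) : (lineCofactor i m).natDegree ≤ m := by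
  refine Polynomial.natDegree_sum_le_of_forall_le _ _ fun u hu => ?_
  refine (Polynomial.natDegree_C_mul_le _ _).trans <| Polynomial.natDegree_mul_le.trans ?_
  have := Nat.lt_succ_iff.1 (Finset.mem_range.1 hu)
  grw [natDegree_ff_X_add_C_le, natDegree_ff_X_add_C_le]
  omega

theorem ff_mul_lineCofactor_summand_eval {i m k u : ℕ} (hk : k < m) (hu : u ≤ m) :
    ff ((k : ℚ) + 1 / 2 + (m + i)) m * (F2Coeff i m u
        * (ff ((k : ℚ) + 1 / 2 + (m + i + u)) u * ff ((k : ℚ) + 1 / 2 + i) (m - u)))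
      = m.factorial * ((-1) ^ u * m.choose u * (ff ((u : ℚ) + ((k : ℚ) + 1 / 2 + (m + i))) k
          * ff ((u : ℚ) + ((i : ℚ) - 1 / 2)) (m - 1 - k))) := by
  -- both sides are `ff t (2 * m)`, split as `u + m + (m - u)` and as `k + (m + 1) + (m - 1 - k)`
  set t : ℚ := (k : ℚ) + 1 / 2 + (m + i + u)
  have hsplit : ff t (u + m + (m - u)) = ff t u * ff ((k : ℚ) + 1 / 2 + (m + i)) m
      * ff ((k : ℚ) + 1 / 2 + i) (m - u) := by
    rw [ff_add_add, show t - u = (k : ℚ) + 1 / 2 + (m + i) by ring,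
      show (k : ℚ) + 1 / 2 + (m + i) - m = (k : ℚ) + 1 / 2 + i by ring]
  have hsplit' : ff t (k + (m + 1) + (m - 1 - k))
      = ff ((u : ℚ) + ((k : ℚ) + 1 / 2 + (m + i))) k * ff ((m : ℚ) + i + u + 1 / 2) (m + 1)
        * ff ((u : ℚ) + ((i : ℚ) - 1 / 2)) (m - 1 - k) := by
    rw [ff_add_add, show t = (u : ℚ) + ((k : ℚ) + 1 / 2 + (m + i)) by ring,
      show (u : ℚ) + ((k : ℚ) + 1 / 2 + (m + i)) - k = (m : ℚ) + i + u + 1 / 2 by ring,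
      show (m : ℚ) + i + u + 1 / 2 - ((m + 1 : ℕ) : ℚ) = (u : ℚ) + ((i : ℚ) - 1 / 2)
        by push_cast; ring]
  rw [show k + (m + 1) + (m - 1 - k) = u + m + (m - u) by omega, hsplit] at hsplit'
  have hden : ff ((m : ℚ) + i + u + 1 / 2) (m + 1) ≠ 0 := (ff_pos (by push_cast; linarith)).ne'
  calc _ = (m.choose u : ℚ) * (-1) ^ u * m.factorial / ff ((m : ℚ) + i + u + 1 / 2) (m + 1)
        * (ff t u * ff ((k : ℚ) + 1 / 2 + (m + i)) m * ff ((k : ℚ) + 1 / 2 + i) (m - u)) := by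
        rw [F2Coeff]; ring
    _ = _ := by
      rw [hsplit', div_mul_eq_mul_div, div_eq_iff hden]
      ring

theorem lineCofactor_eval_eq_zero {i m k : ℕ} (hk : k < m) :
    (lineCofactor i m).eval ((k : ℚ) + 1 / 2) = 0 := by
  set Q : Polynomial ℚ := ff (Polynomial.X + Polynomial.C ((k : ℚ) + 1 / 2 + (m + i))) k
    * ff (Polynomial.X + Polynomial.C ((i : ℚ) - 1 / 2)) (m - 1 - k)
  have hQ : Q.natDegree < m := by
    refine Polynomial.natDegree_mul_le.trans_lt ?_
    grw [natDegree_ff_X_add_C_le, natDegree_ff_X_add_C_le]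
    omega
  have hD : ff ((k : ℚ) + 1 / 2 + (m + i)) m ≠ 0 := (ff_pos (by linarith)).ne'
  refine (mul_eq_zero.1 ?_).resolve_left hD
  simp only [lineCofactor, Polynomial.eval_finsetSum, Polynomial.eval_mul, Polynomial.eval_C,
    eval_ff_X_add_C, Finset.mul_sum]
  rw [Finset.sum_congr rfl fun u hu =>
      ff_mul_lineCofactor_summand_eval hk (Nat.lt_succ_iff.1 (Finset.mem_range.1 hu)),
    ← Finset.mul_sum]
  have := Polynomial.sum_range_neg_one_pow_mul_choose_mul_eval_eq_zero hQ
  simp only [Q, Polynomial.eval_mul, eval_ff_X_add_C] at this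
  rw [this, mul_zero]

theorem lineCofactor_eq (i m : ℕ) :
    lineCofactor i m = Polynomial.C ((lineCofactor i m).coeff m)
      * ff (Polynomial.X - Polynomial.C (1 / 2 : ℚ)) m := by
  set s := (Finset.range m).image fun k : ℕ => (k : ℚ) + 1 / 2
  have hs : s.card = m := by
    rw [Finset.card_image_of_injective _ fun a b h => by simpa using h, Finset.card_range]
  have hprod : ff (Polynomial.X - Polynomial.C (1 / 2 : ℚ)) m
      = ∏ a ∈ s, (Polynomial.X - Polynomial.C a) := by
    rw [Finset.prod_image fun a _ b _ h => by simpa using h, ff]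
    refine Finset.prod_congr rfl fun k _ => ?_
    simp only [map_add, map_natCast]
    ring
  have h := Polynomial.eq_C_coeff_mul_prod_X_sub_C ((natDegree_lineCofactor_le i m).trans hs.ge)
    fun a ha => by
    obtain ⟨k, hk, rfl⟩ := Finset.mem_image.1 ha
    exact lineCofactor_eval_eq_zero (Finset.mem_range.1 hk)
  rwa [hs, ← hprod] at h

theorem ff_y_side_on_line (i m : ℕ) :
    ff (Polynomial.C (m : ℚ) - Polynomial.X + Polynomial.C ((m : ℚ) + i)) (3 * m + 2 * i + 1)
        * ff (Polynomial.C (m : ℚ) - Polynomial.X - Polynomial.C (1 / 2 : ℚ)) m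
      = -(ff (Polynomial.X + Polynomial.C ((m : ℚ) + i)) (3 * m + 2 * i + 1)
        * ff (Polynomial.X - Polynomial.C (1 / 2 : ℚ)) m) := by
  have hhalf : Polynomial.C (1 / 2 : ℚ) + Polynomial.C (1 / 2) = 1 := by
    rw [← map_add]; norm_num
  have hsign : (-1 : Polynomial ℚ) ^ (3 * m + 2 * i + 1) * (-1) ^ m = -1 := by
    rw [← pow_add]; exact Odd.neg_one_pow ⟨2 * m + i, by omega⟩
  rw [show Polynomial.C (m : ℚ) - Polynomial.X + Polynomial.C ((m : ℚ) + i)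
      = ((3 * m + 2 * i + 1 : ℕ) : Polynomial ℚ) - 1
        - (Polynomial.X + Polynomial.C ((m : ℚ) + i)) by
      simp only [map_add, map_natCast]; push_cast; ring,
    show Polynomial.C (m : ℚ) - Polynomial.X - Polynomial.C (1 / 2 : ℚ)
      = (m : Polynomial ℚ) - 1 - (Polynomial.X - Polynomial.C (1 / 2 : ℚ)) by
      rw [map_natCast]; linear_combination -hhalf,
    ff_reflect, ff_reflect]
  linear_combination (ff (Polynomial.X + Polynomial.C ((m : ℚ) + i)) (3 * m + 2 * i + 1)
    * ff (Polynomial.X - Polynomial.C (1 / 2 : ℚ)) m) * hsign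

theorem stmt9 (i m : ℕ) :
    ∃ B : ℚ,
      F2 i m - C B * ff (X 0 + C ((m:ℚ) + i)) (3*m+2*i+1) * ff (X 0 - C (1/2 : ℚ)) m
          ∈ Ideal.span {X 0 + X 1 - C (m:ℚ)} ∧
      F2 i m + C B * ff (X 1 + C ((m:ℚ) + i)) (3*m+2*i+1) * ff (X 1 - C (1/2 : ℚ)) m
          ∈ Ideal.span {(X 0 + X 1 - C (m:ℚ) : MvPolynomial (Fin 2) ℚ)} := by
  refine ⟨(lineCofactor i m).coeff m, mem_span_of_restrictLine_eq_zero ?_,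
    mem_span_of_restrictLine_eq_zero ?_⟩
  · simp only [map_sub, map_add (restrictLine _), map_mul, map_ff, restrictLine_F2,
      restrictLine_C, restrictLine_X_zero]
    linear_combination ff (Polynomial.X + Polynomial.C ((m : ℚ) + i)) (3 * m + 2 * i + 1)
      * lineCofactor_eq i m
  · simp only [map_add (restrictLine _), map_sub (restrictLine _), map_mul, map_ff,
      restrictLine_F2, restrictLine_C, restrictLine_X_one]
    rw [mul_assoc, ff_y_side_on_line]
    linear_combination ff (Polynomial.X + Polynomial.C ((m : ℚ) + i)) (3 * m + 2 * i + 1)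
      * lineCofactor_eq i m
end
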